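/- Let W be a Coxeter group, γ a Coxeter element with fixed reduced word s₁s₂⋯sₙ, and for w ∈ W let α_γ(w) ⊆ ℕ be the set of positions of the γ-sorting word of w in the half-infinite word γ^∞ = s₁⋯sₙ|s₁⋯sₙ|⋯. If u ≤ v in right weak order, then α_γ(u) ⊆ α_γ(v). -/

import Mathlib

/-- The right weak order on a Coxeter group:
`u ≤ v` iff `ℓ(v) = ℓ(u) + ℓ(u⁻¹v)`. -/
def WeakLE {B W : Type*} [Group W] {M : CoxeterMatrix B} (cs : CoxeterSystem M W)
    (u v : W) : Prop :=
  cs.length v = cs.length u + cs.length (u⁻¹ * v)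

/-- The letter of the half-infinite word `γ^∞ = γ|γ|⋯` at (0-indexed) position `i`,
where the Coxeter element `γ` is given by the reduced word `γword`. -/
def gammaLetter {B : Type*} (γword : List B) (hne : γword ≠ []) (i : ℕ) : B :=
  γword.get ⟨i % γword.length, Nat.mod_lt _ (List.length_pos_iff.mpr hne)⟩

/-- The subword of `γ^∞` whose positions form the finite set `A`. -/
def posWord {B : Type*} (γword : List B) (hne : γword ≠ []) (A : Finset ℕ) : List B :=
  (A.sort (· ≤ ·)).map (gammaLetter γword hne)

/-- `α` assigns to each `w ∈ W` the position set of its `γ`-sorting word: the subword of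
`γ^∞` at positions `α w` is a reduced word for `w`, and `α w` is lexicographically least
(as an increasing sequence of positions) among all such position sets. -/
def IsSortingMap {B W : Type*} [Group W] {M : CoxeterMatrix B} (cs : CoxeterSystem M W)
    (γword : List B) (hne : γword ≠ []) (α : W → Finset ℕ) : Prop :=
  ∀ w : W,
    (cs.wordProd (posWord γword hne (α w)) = w ∧ cs.IsReduced (posWord γword hne (α w))) ∧
    ∀ A : Finset ℕ, cs.wordProd (posWord γword hne A) = w →
      cs.IsReduced (posWord γword hne A) →
      α w = A ∨ List.Lex (· < ·) ((α w).sort (· ≤ ·)) (A.sort (· ≤ ·))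

/-- `w` is `γ`-sortable, characterized via position sets: whenever a position `i ≥ n`
occurs in `α w`, so does `i − n` (blocks of the sorting word weakly decrease). -/
def SortableVia {W : Type*} (n : ℕ) (α : W → Finset ℕ) (w : W) : Prop :=
  ∀ i ∈ α w, n ≤ i → i - n ∈ α w

/-!
The `γ`-sorting word of `w` is computed greedily: scan `γ^∞` from the left with a remainder `r`
(initially `w`) and take a position exactly when its letter `s` is a left descent of `r`, replacing
`r` by `s r`. This greedy word is reduced, and it is lexicographically first among the reduced
subwords of `γ^∞` for `w`, so it is the `γ`-sorting word.

If `u ≤ v` in right weak order, the remainders of `u` and `v` stay weakly ordered at every step: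
a left descent of `u` is one of `v`, and a left descent `s` of `v` that is not one of `u` can be
deleted from the part of a reduced word of `v` beyond `u` (exchange property), so `u ≤ s v`.
Hence every position taken for `u` is taken for `v`. The exchange property comes from the
Björner–Brenti action of `W` on `W × Bool`, which shows that the parity of the number of
occurrences of a reflection in the inversion sequence of a word depends only on its product.
-/

namespace CoxeterSystem

variable {B W : Type*} [Group W] {M : CoxeterMatrix B} (cs : CoxeterSystem M W)

local prefix:100 "s" => cs.simple
local prefix:100 "π" => cs.wordProd
local prefix:100 "ℓ" => cs.length
local prefix:100 "ris " => cs.rightInvSeq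
local prefix:100 "lis " => cs.leftInvSeq

theorem alternatingWord_two_mul_succ (i j : B) (k : ℕ) :
    alternatingWord i j (2 * (k + 1)) = i :: j :: alternatingWord i j (2 * k) := by
  rw [show 2 * (k + 1) = 2 * k + 1 + 1 by ring, alternatingWord_succ', alternatingWord_succ']
  simp

theorem prod_map_alternatingWord_two_mul {G : Type*} [Monoid G] (f : B → G) (i j : B) (k : ℕ) :
    ((alternatingWord i j (2 * k)).map f).prod = (f i * f j) ^ k := by
  induction k with
  | zero => simp [alternatingWord]
  | succ k ih => simp [alternatingWord_two_mul_succ, ih, pow_succ', mul_assoc]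

theorem reverse_alternatingWord_two_mul (i j : B) (k : ℕ) :
    (alternatingWord i j (2 * k)).reverse = alternatingWord j i (2 * k) := by
  induction k with
  | zero => simp [alternatingWord]
  | succ k ih =>
    rw [show 2 * (k + 1) = 2 * k + 1 + 1 by ring, alternatingWord_succ, alternatingWord_succ,
      ← show 2 * (k + 1) = 2 * k + 1 + 1 by ring, alternatingWord_two_mul_succ]
    simp [ih]

theorem prod_alternatingWord_add_two_mul (i j : B) (n : ℕ) :
    π (alternatingWord j i (n + 2 * M i j)) = π (alternatingWord j i n) := by
  simp only [prod_alternatingWord_eq_mul_pow, Nat.even_add, even_two_mul, iff_true,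
    show (n + 2 * M i j) / 2 = n / 2 + M i j by omega, pow_add, simple_mul_simple_pow', mul_one]

theorem even_count_leftInvSeq_alternatingWord [DecidableEq W] (i j : B) (t : W) :
    Even ((lis (alternatingWord i j (2 * M i j))).count t) := by
  set L := lis (alternatingWord i j (2 * M i j))
  have hL : L.drop (M i j) = L.take (M i j) := by
    apply List.ext_getElem
    · simp [L]; omega
    · intro k h₁ h₂
      simp only [L, List.getElem_drop, List.getElem_take]
      rw [getElem_leftInvSeq_alternatingWord cs i j _ _ (by simp [L] at h₁; omega),
        getElem_leftInvSeq_alternatingWord cs i j _ _ (by simp [L] at h₂; omega),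
        show 2 * (M i j + k) + 1 = 2 * k + 1 + 2 * M i j by ring, prod_alternatingWord_add_two_mul]
  rw [← List.take_append_drop (M i j) L, hL, List.count_append]
  exact ⟨_, rfl⟩

section SignRepresentation

variable [DecidableEq W]

/-- Björner–Brenti's action of `s i` on `T × {±1}` (Thm. 1.4.3 of *Combinatorics of Coxeter
Groups*), with `T × {±1}` enlarged to `W × Bool`. -/
def reflectionFlip (i : B) (p : W × Bool) : W × Bool :=
  (s i * p.1 * s i, p.2 ^^ decide (p.1 = s i))

theorem reflectionFlip_involutive (i : B) : Function.Involutive (cs.reflectionFlip i) := by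
  rintro ⟨t, ε⟩
  have h₁ : s i * (s i * t * s i) * s i = t := by simp [mul_assoc]
  have h₂ : s i * t * s i = s i ↔ t = s i := by
    rw [mul_eq_right, mul_eq_one_iff_inv_eq, inv_simple, eq_comm]
  simp only [reflectionFlip, h₁, h₂, Bool.xor_assoc, Bool.xor_self, Bool.xor_false]

def reflectionPerm (i : B) : Equiv.Perm (W × Bool) :=
  (cs.reflectionFlip_involutive i).toPerm

theorem prod_map_reflectionPerm_apply (ω : List B) (t : W) (ε : Bool) :
    (ω.map cs.reflectionPerm).prod (t, ε) =
      (π ω * t * (π ω)⁻¹, ε ^^ ((ris ω).count t).bodd) := by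
  induction ω generalizing t ε with
  | nil => simp
  | cons i ω ih =>
    have h : π ω * (t * (π ω)⁻¹) = s i ↔ (π ω)⁻¹ * (s i * π ω) = t := by
      constructor <;> intro h <;> rw [← h] <;> group
    simp only [List.map_cons, List.prod_cons, Equiv.Perm.mul_apply, ih, rightInvSeq,
      List.count_cons, Nat.bodd_add, wordProd_cons]
    by_cases ht : (π ω)⁻¹ * (s i * π ω) = t <;>
      simp [reflectionPerm, reflectionFlip, h, ht, mul_assoc]

theorem reflectionPerm_isLiftable : M.IsLiftable cs.reflectionPerm := by
  intro i j
  ext ⟨t, ε⟩ : 1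
  rw [← prod_map_alternatingWord_two_mul, prod_map_reflectionPerm_apply]
  have h1 : π (alternatingWord i j (2 * M i j)) = 1 := by
    rw [wordProd, prod_map_alternatingWord_two_mul, simple_mul_simple_pow]
  have h2 : ((ris (alternatingWord i j (2 * M i j))).count t).bodd = false := by
    obtain ⟨c, hc⟩ := cs.even_count_leftInvSeq_alternatingWord j i t
    rw [← List.count_reverse, ← leftInvSeq_reverse, reverse_alternatingWord_two_mul,
      M.symmetric, hc, Nat.bodd_add, Bool.xor_self]
  simp [h1, h2]

def signRep : W →* Equiv.Perm (W × Bool) :=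
  cs.lift ⟨cs.reflectionPerm, cs.reflectionPerm_isLiftable⟩

theorem signRep_wordProd (ω : List B) : cs.signRep (π ω) = (ω.map cs.reflectionPerm).prod := by
  simp [signRep, wordProd, map_list_prod, List.map_map, Function.comp_def, lift_apply_simple]

theorem bodd_count_rightInvSeq_eq {ω ω' : List B} (h : π ω = π ω') (t : W) :
    ((ris ω).count t).bodd = ((ris ω').count t).bodd := by
  have := congrArg (fun g => (cs.signRep g (t, false)).2) h
  simpa [signRep_wordProd, prod_map_reflectionPerm_apply] using this

end SignRepresentation

theorem simple_mem_rightInvSeq_of_isRightDescent {ω : List B} {i : B}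
    (hi : cs.IsRightDescent (π ω) i) : s i ∈ ris ω := by
  classical
  obtain ⟨τ, hτ, hτω⟩ := cs.exists_isReduced (π ω * s i)
  have hprod : π (τ.concat i) = π ω := by
    rw [wordProd_concat, ← hτω, simple_mul_simple_cancel_right]
  have hred : cs.IsReduced (τ.concat i) := by
    rw [IsReduced, hprod, List.length_concat, ← hτ.eq, ← hτω, cs.isRightDescent_iff.mp hi]
  have hcount : (ris (τ.concat i)).count (s i) = 1 :=
    List.count_eq_one_of_mem hred.nodup_rightInvSeq (by rw [rightInvSeq_concat]; simp)
  have hodd := cs.bodd_count_rightInvSeq_eq hprod (s i)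
  rw [hcount] at hodd
  refine List.count_pos_iff.mp (Nat.pos_of_ne_zero fun h => ?_)
  simp [h] at hodd

theorem simple_mem_leftInvSeq_of_isLeftDescent {ω : List B} {i : B}
    (hi : cs.IsLeftDescent (π ω) i) : s i ∈ lis ω := by
  have := cs.simple_mem_rightInvSeq_of_isRightDescent (ω := ω.reverse)
    (by rwa [wordProd_reverse, isRightDescent_inv_iff])
  simpa [rightInvSeq_reverse] using this

theorem exists_eraseIdx_of_isLeftDescent_append {ω ω' : List B} (hω : cs.IsReduced ω) {i : B}
    (hi : ¬ cs.IsLeftDescent (π ω) i) (hi' : cs.IsLeftDescent (π (ω ++ ω')) i) :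
    ∃ k < ω'.length, s i * π (ω ++ ω') = π ω * π (ω'.eraseIdx k) := by
  obtain ⟨k, hk, hki⟩ := List.getElem_of_mem (cs.simple_mem_leftInvSeq_of_isLeftDescent hi')
  have hωk : ω.length ≤ k := by
    by_contra! hkω
    have hmem := List.getElem_mem (l := (lis (ω ++ ω')).take ω.length) (n := k)
      (by simpa using hkω)
    rw [List.getElem_take, hki, ← leftInvSeq_take, List.take_left] at hmem
    exact hi ((cs.isLeftInversion_simple_iff_isLeftDescent _ _).mp
      (cs.isLeftInversion_of_mem_leftInvSeq hω hmem))
  refine ⟨k - ω.length, by simp at hk; omega, ?_⟩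
  rw [← hki, ← List.getD_eq_getElem _ 1, getD_leftInvSeq_mul_wordProd,
    List.eraseIdx_append_of_length_le hωk, wordProd_append]

theorem IsReduced.isLeftDescent_cons {i : B} {ω : List B} (h : cs.IsReduced (i :: ω)) :
    cs.IsLeftDescent (π (i :: ω)) i := by
  rw [IsLeftDescent, wordProd_cons, simple_mul_simple_cancel_left, ← wordProd_cons, h.eq]
  simpa using Nat.lt_succ_of_le (cs.length_wordProd_le ω)

end CoxeterSystem

open CoxeterSystem

section WeakOrder

variable {B W : Type*} [Group W] {M : CoxeterMatrix B} {cs : CoxeterSystem M W}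
  {u v : W} {i : B}

local prefix:100 "s" => cs.simple
local prefix:100 "π" => cs.wordProd
local prefix:100 "ℓ" => cs.length

theorem WeakLE.isLeftDescent (huv : WeakLE cs u v) (hu : cs.IsLeftDescent u i) :
    cs.IsLeftDescent v i := by
  have : ℓ (s i * v) ≤ ℓ (s i * u) + ℓ (u⁻¹ * v) := by
    simpa [mul_assoc] using cs.length_mul_le (s i * u) (u⁻¹ * v)
  rw [IsLeftDescent] at *
  unfold WeakLE at huv
  omega

theorem WeakLE.simple_mul (huv : WeakLE cs u v) (hu : cs.IsLeftDescent u i) :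
    WeakLE cs (s i * u) (s i * v) := by
  have hv := cs.isLeftDescent_iff.mp (huv.isLeftDescent hu)
  have hu := cs.isLeftDescent_iff.mp hu
  have hq : (s i * u)⁻¹ * (s i * v) = u⁻¹ * v := by simp [mul_assoc]
  unfold WeakLE at *
  rw [hq]
  omega

theorem WeakLE.le_simple_mul (huv : WeakLE cs u v) (hu : ¬ cs.IsLeftDescent u i)
    (hv : cs.IsLeftDescent v i) : WeakLE cs u (s i * v) := by
  obtain ⟨ωu, hωu, rfl⟩ := cs.exists_isReduced u
  obtain ⟨ωx, hωx, hx⟩ := cs.exists_isReduced ((π ωu)⁻¹ * v)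
  obtain rfl : v = π (ωu ++ ωx) := by rw [wordProd_append, ← hx, mul_inv_cancel_left]
  obtain ⟨k, hk, hdel⟩ := cs.exists_eraseIdx_of_isLeftDescent_append hωu hu hv
  have hlen : ℓ ((π ωu)⁻¹ * (s i * π (ωu ++ ωx))) + 1 ≤ ωx.length := by
    rw [hdel, inv_mul_cancel_left]
    have := cs.length_wordProd_le (ωx.eraseIdx k)
    rw [List.length_eraseIdx_of_lt hk] at this
    omega
  have htri := cs.length_mul_le (π ωu) ((π ωu)⁻¹ * (s i * π (ωu ++ ωx)))
  rw [mul_inv_cancel_left] at htri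
  have hxlen : ℓ ((π ωu)⁻¹ * π (ωu ++ ωx)) = ωx.length := by rw [hx, hωx.eq]
  have hv := cs.isLeftDescent_iff.mp hv
  unfold WeakLE at *
  omega

end WeakOrder

section GreedySorting

variable {B W : Type*} [Group W] {M : CoxeterMatrix B} (cs : CoxeterSystem M W)
  (γword : List B) (hne : γword ≠ [])

local notation "ℓ" => cs.length
local notation "N" => γword.length

open Classical in
noncomputable def greedyRem (w : W) : ℕ → W
  | 0 => w
  | i + 1 =>
    if cs.IsLeftDescent (greedyRem w i) (gammaLetter γword hne i) then
      cs.simple (gammaLetter γword hne i) * greedyRem w i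
    else greedyRem w i

def IsGreedyPos (w : W) (i : ℕ) : Prop :=
  cs.IsLeftDescent (greedyRem cs γword hne w i) (gammaLetter γword hne i)

open Classical in
/-- The cut-off `N * ℓ w` loses nothing: no later position is greedy (`IsGreedyPos.lt`). -/
noncomputable def greedyFrom (w : W) (i : ℕ) : List ℕ :=
  (List.range' i (N * ℓ w - i)).filter (IsGreedyPos cs γword hne w ·)

noncomputable def greedySet (w : W) : Finset ℕ := (greedyFrom cs γword hne w 0).toFinset

variable {cs γword hne} {w : W} {i : ℕ}

theorem greedyRem_zero : greedyRem cs γword hne w 0 = w := rfl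

theorem greedyRem_succ_of_isGreedyPos (h : IsGreedyPos cs γword hne w i) :
    greedyRem cs γword hne w (i + 1) =
      cs.simple (gammaLetter γword hne i) * greedyRem cs γword hne w i := by
  rw [greedyRem]
  exact if_pos h

theorem greedyRem_succ_of_not_isGreedyPos (h : ¬ IsGreedyPos cs γword hne w i) :
    greedyRem cs γword hne w (i + 1) = greedyRem cs γword hne w i := by
  rw [greedyRem]
  exact if_neg h

theorem length_greedyRem_succ_lt (h : IsGreedyPos cs γword hne w i) :
    ℓ (greedyRem cs γword hne w (i + 1)) < ℓ (greedyRem cs γword hne w i) := by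
  rw [greedyRem_succ_of_isGreedyPos h]
  exact h

theorem length_greedyRem_le_of_le {j : ℕ} (hij : i ≤ j) :
    ℓ (greedyRem cs γword hne w j) ≤ ℓ (greedyRem cs γword hne w i) := by
  refine antitone_nat_of_succ_le (f := fun i => ℓ (greedyRem cs γword hne w i)) (fun i => ?_) hij
  by_cases h : IsGreedyPos cs γword hne w i
  · exact (length_greedyRem_succ_lt h).le
  · rw [greedyRem_succ_of_not_isGreedyPos h]

theorem greedyRem_eq_one_of_le {j : ℕ} (hij : i ≤ j) (h : greedyRem cs γword hne w i = 1) :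
    greedyRem cs γword hne w j = 1 := by
  rw [← cs.length_eq_zero_iff] at h ⊢
  exact Nat.eq_zero_of_le_zero (h ▸ length_greedyRem_le_of_le hij)

theorem greedyRem_add_of_forall_not_isGreedyPos {d : ℕ}
    (h : ∀ k, i ≤ k → k < i + d → ¬ IsGreedyPos cs γword hne w k) :
    greedyRem cs γword hne w (i + d) = greedyRem cs γword hne w i := by
  induction d with
  | zero => rfl
  | succ d ih =>
    rw [← add_assoc, greedyRem_succ_of_not_isGreedyPos (h _ (by omega) (by omega))]
    exact ih fun k hk₁ hk₂ => h k hk₁ (by omega)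

theorem exists_gammaLetter_eq (hγ : ∀ b : B, b ∈ γword) (b : B) (i : ℕ) :
    ∃ j, i ≤ j ∧ j < i + N ∧ gammaLetter γword hne j = b := by
  obtain ⟨⟨p, hp⟩, rfl⟩ := List.mem_iff_get.mp (hγ b)
  have hN : 0 < N := by omega
  refine ⟨i + (p + N - i % N) % N, by omega,
    by have := Nat.mod_lt (p + N - i % N) hN; omega, ?_⟩
  have hmod : (i + (p + N - i % N) % N) % N = p := by
    have := Nat.mod_lt i hN
    have := Nat.div_add_mod i N
    rw [Nat.add_mod_mod,
      show i + (p + N - i % N) = p + N * (i / N + 1) by rw [Nat.mul_add_one]; omega,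
      Nat.add_mul_mod_self_left, Nat.mod_eq_of_lt hp]
  simp only [gammaLetter, hmod]

theorem length_greedyRem_add_le (hγ : ∀ b : B, b ∈ γword) (i : ℕ) :
    ℓ (greedyRem cs γword hne w (i + N)) ≤ ℓ (greedyRem cs γword hne w i) - 1 := by
  by_cases h1 : greedyRem cs γword hne w i = 1
  · simp [h1, greedyRem_eq_one_of_le (show i ≤ i + N by omega) h1]
  obtain ⟨b, hb⟩ := cs.exists_leftDescent_of_ne_one h1
  obtain ⟨j, hij, hjN, hjb⟩ := exists_gammaLetter_eq (hne := hne) hγ b i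
  obtain ⟨k, hik, hkj, hk⟩ : ∃ k, i ≤ k ∧ k ≤ j ∧ IsGreedyPos cs γword hne w k := by
    by_contra! h
    have hrem := greedyRem_add_of_forall_not_isGreedyPos (d := j - i)
      fun k hk₁ hk₂ => h k hk₁ (by omega)
    rw [Nat.add_sub_cancel' hij] at hrem
    exact h j hij le_rfl (by rw [IsGreedyPos, hrem, hjb]; exact hb)
  have := length_greedyRem_succ_lt hk
  have := length_greedyRem_le_of_le (cs := cs) (hne := hne) (w := w) (show k + 1 ≤ i + N by omega)
  have := length_greedyRem_le_of_le (cs := cs) (hne := hne) (w := w) hik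
  omega

theorem greedyRem_eq_one (hγ : ∀ b : B, b ∈ γword) (h : N * ℓ w ≤ i) :
    greedyRem cs γword hne w i = 1 := by
  refine greedyRem_eq_one_of_le h (cs.length_eq_zero_iff.mp ?_)
  suffices ∀ k, ℓ (greedyRem cs γword hne w (N * k)) ≤ ℓ w - k by simpa using this (ℓ w)
  intro k
  induction k with
  | zero => simp [greedyRem_zero]
  | succ k ih =>
    have := length_greedyRem_add_le (cs := cs) (hne := hne) (w := w) hγ (N * k)
    rw [Nat.mul_succ]
    omega

theorem IsGreedyPos.lt (hγ : ∀ b : B, b ∈ γword) (h : IsGreedyPos cs γword hne w i) :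
    i < N * ℓ w := by
  by_contra! hi
  rw [IsGreedyPos, greedyRem_eq_one hγ hi] at h
  exact cs.not_isLeftDescent_one _ h

theorem greedyFrom_of_le (h : N * ℓ w ≤ i) : greedyFrom cs γword hne w i = [] := by
  simp [greedyFrom, Nat.sub_eq_zero_of_le h]

theorem greedyFrom_of_isGreedyPos (hγ : ∀ b : B, b ∈ γword)
    (h : IsGreedyPos cs γword hne w i) :
    greedyFrom cs γword hne w i = i :: greedyFrom cs γword hne w (i + 1) := by
  rw [greedyFrom, show N * ℓ w - i = N * ℓ w - (i + 1) + 1 by have := h.lt hγ; omega,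
    List.range'_succ, List.filter_cons_of_pos (by simpa using h)]
  rfl

theorem greedyFrom_of_not_isGreedyPos (h : ¬ IsGreedyPos cs γword hne w i) :
    greedyFrom cs γword hne w i = greedyFrom cs γword hne w (i + 1) := by
  rcases lt_or_ge i (N * ℓ w) with hi | hi
  · rw [greedyFrom, show N * ℓ w - i = N * ℓ w - (i + 1) + 1 by omega,
      List.range'_succ, List.filter_cons_of_neg (by simpa using h)]
    rfl
  · rw [greedyFrom_of_le hi, greedyFrom_of_le (by omega)]

theorem wordProd_and_length_greedyFrom (hγ : ∀ b : B, b ∈ γword) (i : ℕ) :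
    cs.wordProd ((greedyFrom cs γword hne w i).map (gammaLetter γword hne)) =
        greedyRem cs γword hne w i ∧
      (greedyFrom cs γword hne w i).length = ℓ (greedyRem cs γword hne w i) := by
  induction hk : N * ℓ w - i generalizing i with
  | zero =>
    rw [greedyFrom_of_le (by omega), greedyRem_eq_one hγ (by omega)]
    simp
  | succ k ih =>
    by_cases h : IsGreedyPos cs γword hne w i
    · obtain ⟨ih₁, ih₂⟩ := ih (i + 1) (by omega)
      rw [greedyRem_succ_of_isGreedyPos h] at ih₁ ih₂
      rw [greedyFrom_of_isGreedyPos hγ h, List.map_cons, wordProd_cons, ih₁,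
        simple_mul_simple_cancel_left, List.length_cons, ih₂]
      exact ⟨rfl, cs.isLeftDescent_iff.mp h⟩
    · rw [greedyFrom_of_not_isGreedyPos h, ← greedyRem_succ_of_not_isGreedyPos h]
      exact ih (i + 1) (by omega)

theorem greedyFrom_eq_or_lex (hγ : ∀ b : B, b ∈ γword) {A : List ℕ}
    (hA : A.Pairwise (· < ·)) (hiA : ∀ a ∈ A, i ≤ a)
    (hprod : cs.wordProd (A.map (gammaLetter γword hne)) = greedyRem cs γword hne w i)
    (hred : cs.IsReduced (A.map (gammaLetter γword hne))) :
    greedyFrom cs γword hne w i = A ∨ List.Lex (· < ·) (greedyFrom cs γword hne w i) A := by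
  induction A generalizing i with
  | nil =>
    left
    have := (wordProd_and_length_greedyFrom (cs := cs) (hne := hne) (w := w) hγ i).2
    rw [← hprod] at this
    simpa using this
  | cons a A ih =>
    rw [List.pairwise_cons] at hA
    obtain ⟨haA, hA⟩ := hA
    obtain ⟨d, rfl⟩ : ∃ d, a = i + d := ⟨a - i, by have := hiA a (by simp); omega⟩
    clear hiA
    induction d generalizing i with
    | zero =>
      simp only [add_zero] at *
      have hi : IsGreedyPos cs γword hne w i := by
        rw [IsGreedyPos, ← hprod]
        exact hred.isLeftDescent_cons
      rw [greedyFrom_of_isGreedyPos hγ hi]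
      rw [List.map_cons, wordProd_cons] at hprod
      have hprod' : cs.wordProd (A.map (gammaLetter γword hne)) =
          greedyRem cs γword hne w (i + 1) := by
        rw [greedyRem_succ_of_isGreedyPos hi, ← hprod, simple_mul_simple_cancel_left]
      rcases ih hA haA hprod' (by simpa using hred.drop 1) with h | h
      · exact .inl (by rw [h])
      · exact .inr (.cons h)
    | succ d ihd =>
      by_cases hi : IsGreedyPos cs γword hne w i
      · rw [greedyFrom_of_isGreedyPos hγ hi]
        exact .inr (.rel (by omega))
      · rw [greedyFrom_of_not_isGreedyPos hi]
        rw [← greedyRem_succ_of_not_isGreedyPos hi] at hprod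
        rw [show i + (d + 1) = i + 1 + d by omega] at *
        apply ihd <;> assumption

theorem sort_greedySet :
    (greedySet cs γword hne w).sort (· ≤ ·) = greedyFrom cs γword hne w 0 := by
  have h : (greedyFrom cs γword hne w 0).Pairwise (· < ·) :=
    List.Pairwise.filter _ List.pairwise_lt_range'
  exact (List.toFinset_sort _ (h.imp ne_of_lt)).mpr (h.imp le_of_lt)

theorem mem_greedySet (hγ : ∀ b : B, b ∈ γword) {x : ℕ} :
    x ∈ greedySet cs γword hne w ↔ IsGreedyPos cs γword hne w x := by
  simp only [greedySet, greedyFrom, List.mem_toFinset, List.mem_filter, List.mem_range'_1,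
    decide_eq_true_eq]
  exact ⟨And.right, fun h => ⟨⟨Nat.zero_le x, by have := h.lt hγ; omega⟩, h⟩⟩

theorem weakLE_greedyRem {u v : W} (huv : WeakLE cs u v) (i : ℕ) :
    WeakLE cs (greedyRem cs γword hne u i) (greedyRem cs γword hne v i) := by
  induction i with
  | zero => exact huv
  | succ i ih =>
    by_cases hu : IsGreedyPos cs γword hne u i
    · have hv : IsGreedyPos cs γword hne v i := ih.isLeftDescent hu
      rw [greedyRem_succ_of_isGreedyPos hu, greedyRem_succ_of_isGreedyPos hv]
      exact ih.simple_mul hu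
    · rw [greedyRem_succ_of_not_isGreedyPos hu]
      by_cases hv : IsGreedyPos cs γword hne v i
      · rw [greedyRem_succ_of_isGreedyPos hv]
        exact ih.le_simple_mul hu hv
      · rw [greedyRem_succ_of_not_isGreedyPos hv]
        exact ih

theorem WeakLE.isGreedyPos {u v : W} (huv : WeakLE cs u v) (h : IsGreedyPos cs γword hne u i) :
    IsGreedyPos cs γword hne v i :=
  (weakLE_greedyRem huv i).isLeftDescent h

end GreedySorting

theorem IsSortingMap.eq_greedySet {B W : Type*} [Group W] {M : CoxeterMatrix B}
    {cs : CoxeterSystem M W} {γword : List B} {hne : γword ≠ []} {α : W → Finset ℕ}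
    (hα : IsSortingMap cs γword hne α) (hγ : ∀ b : B, b ∈ γword) (w : W) :
    α w = greedySet cs γword hne w := by
  obtain ⟨⟨hprod, hred⟩, hmin⟩ := hα w
  have hG := wordProd_and_length_greedyFrom (cs := cs) (hne := hne) (w := w) hγ 0
  rw [greedyRem_zero] at hG
  rcases hmin (greedySet cs γword hne w) (by rw [posWord, sort_greedySet, hG.1])
    (by rw [CoxeterSystem.IsReduced, posWord, sort_greedySet, hG.1, List.length_map, hG.2])
    with h | h
  · exact h
  rcases greedyFrom_eq_or_lex hγ (List.sortedLT_iff_pairwise.mp (Finset.sortedLT_sort _))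
    (fun _ _ => Nat.zero_le _) hprod hred with h' | h'
  · rw [← Finset.sort_toFinset (α w) (· ≤ ·), ← h', ← sort_greedySet, Finset.sort_toFinset]
  · rw [sort_greedySet] at h
    exact absurd h' (asymm h)

theorem stmt12_general {B W : Type*} [Group W] {M : CoxeterMatrix B}
    (cs : CoxeterSystem M W)
    (γword : List B) (hne : γword ≠ [])
    (hγ : γword.Nodup ∧ ∀ b : B, b ∈ γword)
    (α : W → Finset ℕ) (hα : IsSortingMap cs γword hne α)
    (u v : W) (huv : WeakLE cs u v) :
    α u ⊆ α v := by
  intro x hx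
  rw [hα.eq_greedySet hγ.2, mem_greedySet hγ.2] at hx ⊢
  exact huv.isGreedyPos hx

/-- If `u ≤ v` in right weak order, then the position set of the `γ`-sorting word of `u`
is contained in that of `v`. -/
theorem stmt12 {B W : Type*} [Finite B] [Group W] {M : CoxeterMatrix B}
    (cs : CoxeterSystem M W)
    (γword : List B) (hne : γword ≠ [])
    (hγ : γword.Nodup ∧ ∀ b : B, b ∈ γword)
    (α : W → Finset ℕ) (hα : IsSortingMap cs γword hne α)
    (u v : W) (huv : WeakLE cs u v) :
    α u ⊆ α v :=
  stmt12_general cs γword hne hγ α hα u v huv
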